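/- Let 0 < p \leq 1/2. Assume the norm estimate \|\sigma_n f\|_{H_p} \leq c_p n^{1/p - 2} \log^{2[1/2+p]} n \cdot \|f\|_{H_p} holds for all n \geq 2, and that \|\sigma_{M_N} f - f\|_{H_p} \to 0. If f \in H_p satisfies \omega_{H_p}(1/M_N, f) = o(M_N^{-(1/p-2)} N^{-2[1/2+p]}) as N \to \infty, then \|\sigma_n f - f\|_{H_p} \to 0 as n \to \infty. -/

import Mathlib

open MeasureTheory Complex Filter
open scoped Classical
open scoped ENNReal NNReal

noncomputable section

def vM (m : ℕ → ℕ) : ℕ → ℕ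
  | 0 => 1
  | n + 1 => m n * vM m n

abbrev VG (m : ℕ → ℕ) := ∀ k : ℕ, Fin (m k)

def vdigit (m : ℕ → ℕ) (n j : ℕ) : ℕ := (n / vM m j) % m j

def vpsi (m : ℕ → ℕ) (n : ℕ) (x : VG m) : ℂ :=
  ∏ k ∈ Finset.range (n + 1),
    Complex.exp (2 * Real.pi * Complex.I * (vdigit m n k) * ((x k : ℕ) : ℂ) / (m k))

def vD (m : ℕ → ℕ) (n : ℕ) (x : VG m) : ℂ := ∑ k ∈ Finset.range n, vpsi m k x

variable {m : ℕ → ℕ}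

def vCoeff (μ : Measure (VG m)) (f : VG m → ℂ) (i : ℕ) : ℂ :=
  ∫ x, f x * (starRingEnd ℂ) (vpsi m i x) ∂μ

def vS (μ : Measure (VG m)) (f : VG m → ℂ) (n : ℕ) (x : VG m) : ℂ :=
  ∑ k ∈ Finset.range n, vCoeff μ f k * vpsi m k x

def vSigma (μ : Measure (VG m)) (f : VG m → ℂ) (n : ℕ) (x : VG m) : ℂ :=
  (n : ℂ)⁻¹ * ∑ k ∈ Finset.Icc 1 n, vS μ f k x

def vCyl (m : ℕ → ℕ) (n : ℕ) (x : VG m) : Set (VG m) := {y | ∀ i < n, y i = x i}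

def vI (m : ℕ → ℕ) (n : ℕ) : Set (VG m) := {y | ∀ i < n, (y i : ℕ) = 0}

def isVHaar (μ : Measure (VG m)) : Prop :=
  ∀ n (x : VG m), μ (vCyl m n x) = ((vM m n : ℝ≥0∞))⁻¹

def vHp (μ : Measure (VG m)) (p : ℝ) (f : VG m → ℂ) : ℝ≥0∞ :=
  (∫⁻ x, (⨆ k, ENNReal.ofReal ‖vS μ f (vM m k) x‖) ^ p ∂μ) ^ (1 / p)

def vLpE (μ : Measure (VG m)) (p : ℝ) (g : VG m → ℝ≥0∞) : ℝ≥0∞ :=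
  (∫⁻ x, (g x) ^ p ∂μ) ^ (1 / p)

/-! For `M = M_N < n ≤ M_{N+1}`, orthonormality of the Vilenkin characters gives
`σ_n S_M f - S_M f = (M/n) (σ_M f - S_M f)`, hence
`σ_n f - f = σ_n (f - S_M f) + (M/n) (σ_M f - f) + (1 - M/n) (S_M f - f)`.
By the `p`-triangle inequality for `‖·‖_{H_p} ^ p` the last two terms are controlled by
`‖σ_M f - f‖_{H_p}` and `ω_{H_p}(1/M_N, f)`. For the first, the norm estimate together with
`n ≤ B M_N` and `log n ≤ 2 N log B` (where `m k ≤ B`) bounds it by a constant times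
`M_N ^ (1/p - 2) N ^ (2[1/2+p]) ω_{H_p}(1/M_N, f)`, which tends to `0` by the modulus condition. -/

open Finset ComplexConjugate

lemma vM_succ (n : ℕ) : vM m (n + 1) = m n * vM m n := rfl

lemma vM_pos (hm : ∀ k, 2 ≤ m k) (n : ℕ) : 0 < vM m n := by
  induction n with
  | zero => simp [vM]
  | succ n ih => rw [vM_succ]; exact Nat.mul_pos (by linarith [hm n]) ih

lemma lt_vM (hm : ∀ k, 2 ≤ m k) (n : ℕ) : n < vM m n := by
  induction n with
  | zero => simp [vM]
  | succ n ih => rw [vM_succ]; nlinarith [hm n]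

lemma vM_mono (hm : ∀ k, 2 ≤ m k) : Monotone (vM m) :=
  monotone_nat_of_le_succ fun n => by rw [vM_succ]; nlinarith [hm n, vM_pos hm n]

lemma vM_le_pow {B : ℕ} (hB : ∀ k, m k ≤ B) (N : ℕ) : vM m N ≤ B ^ N := by
  induction N with
  | zero => simp [vM]
  | succ N ih => rw [vM_succ, pow_succ']; exact Nat.mul_le_mul (hB N) ih

lemma vdigit_lt (hm : ∀ k, 2 ≤ m k) (n j : ℕ) : vdigit m n j < m j :=
  Nat.mod_lt _ (by linarith [hm j])

lemma vdigit_eq_zero {n j : ℕ} (h : n < vM m j) : vdigit m n j = 0 := by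
  simp [vdigit, Nat.div_eq_of_lt h]

lemma mod_vM_succ (n j : ℕ) : n % vM m (j + 1) = n % vM m j + vM m j * vdigit m n j := by
  rw [vM_succ, mul_comm, Nat.mod_mul, vdigit]

lemma mod_vM_eq_of_vdigit_eq {j k L : ℕ} (h : ∀ i < L, vdigit m j i = vdigit m k i) :
    j % vM m L = k % vM m L := by
  induction L with
  | zero => simp [vM, Nat.mod_one]
  | succ L ih =>
    rw [mod_vM_succ, mod_vM_succ, ih fun i hi => h i (by omega), h L (by omega)]

lemma eq_of_vdigit_eq {j k L : ℕ} (hj : j < vM m L) (hk : k < vM m L)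
    (h : ∀ i < L, vdigit m j i = vdigit m k i) : j = k := by
  simpa [Nat.mod_eq_of_lt hj, Nat.mod_eq_of_lt hk] using mod_vM_eq_of_vdigit_eq h

def vchar (m : ℕ → ℕ) (k d a : ℕ) : ℂ :=
  Complex.exp (2 * Real.pi * Complex.I * d * a / m k)

lemma vpsi_eq_prod_vchar (n : ℕ) (x : VG m) :
    vpsi m n x = ∏ k ∈ range (n + 1), vchar m k (vdigit m n k) (x k) := rfl

lemma norm_vchar (k d a : ℕ) : ‖vchar m k d a‖ = 1 := by
  rw [vchar, Complex.norm_exp]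
  simp

lemma vchar_zero (k a : ℕ) : vchar m k 0 a = 1 := by
  simp [vchar]

lemma sum_vchar_mul_conj_eq_zero {k d d' : ℕ} (hd : d < m k) (hd' : d' < m k) (hne : d ≠ d') :
    ∑ a : Fin (m k), vchar m k d a * conj (vchar m k d' a) = 0 := by
  have hmk : m k ≠ 0 := by omega
  set ζ := Complex.exp (2 * Real.pi * Complex.I / m k)
  have hζ : IsPrimitiveRoot ζ (m k) := Complex.isPrimitiveRoot_exp _ hmk
  have hpow : ∀ d a : ℕ, vchar m k d a = (ζ ^ d) ^ a := fun d a => by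
    rw [← pow_mul, ← Complex.exp_nat_mul, vchar]; push_cast; ring_nf
  set w := ζ ^ d / ζ ^ d'
  have hw : w ^ m k = 1 := by
    rw [div_pow, ← pow_mul, ← pow_mul, mul_comm d, mul_comm d', pow_mul, pow_mul, hζ.pow_eq_one]
    simp
  have hw1 : w ≠ 1 := fun h => hne (hζ.pow_inj hd hd' ((div_eq_one_iff_eq
    (pow_ne_zero _ (hζ.ne_zero hmk))).1 h))
  have hterm : ∀ a : ℕ, vchar m k d a * conj (vchar m k d' a) = w ^ a := fun a => by
    rw [← Complex.inv_eq_conj (norm_vchar _ _ _), hpow, hpow, ← inv_pow, ← mul_pow,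
      ← div_eq_mul_inv]
  simp only [hterm]
  rw [Fin.sum_univ_eq_sum_range (w ^ ·), geom_sum_eq hw1, hw, sub_self, zero_div]

lemma norm_vpsi (n : ℕ) (x : VG m) : ‖vpsi m n x‖ = 1 := by
  rw [vpsi_eq_prod_vchar, norm_prod]
  exact prod_eq_one fun k _ => norm_vchar _ _ _

lemma measurable_vpsi (n : ℕ) : Measurable (vpsi m n) :=
  Finset.measurable_prod _ fun k _ =>
    (Measurable.of_discrete (f := fun a : Fin (m k) => vchar m k (vdigit m n k) a)).comp
      (measurable_pi_apply k)

lemma integrable_vpsi {μ : Measure (VG m)} [IsFiniteMeasure μ] (n : ℕ) :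
    Integrable (vpsi m n) μ :=
  (integrable_const (1 : ℝ)).mono' (measurable_vpsi n).aestronglyMeasurable
    (Eventually.of_forall fun x => (norm_vpsi n x).le)

lemma MeasureTheory.Integrable.mul_conj_vpsi {μ : Measure (VG m)} {g : VG m → ℂ}
    (hg : Integrable g μ) (i : ℕ) : Integrable (fun x => g x * conj (vpsi m i x)) μ :=
  hg.mul_bdd (c := 1)
    (Complex.continuous_conj.measurable.comp (measurable_vpsi i)).aestronglyMeasurable
    (Eventually.of_forall fun x => by simp [norm_vpsi])

lemma vpsi_eq_prod_range {n L : ℕ} (hm : ∀ k, 2 ≤ m k) (hL : n + 1 ≤ L) (x : VG m) :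
    vpsi m n x = ∏ k ∈ range L, vchar m k (vdigit m n k) (x k) := by
  rw [vpsi_eq_prod_vchar]
  refine prod_subset (range_subset_range.2 hL) fun k _ hk => ?_
  have hnk : n < vM m k := (lt_vM hm n).trans_le (vM_mono hm (by simp at hk; omega))
  rw [vdigit_eq_zero hnk, vchar_zero]

/-- Each fibre of the restriction to the first `L` coordinates is a cylinder of mass `1 / M_L`. -/
lemma integral_comp_restrict (hm : ∀ k, 2 ≤ m k) {μ : Measure (VG m)} [IsFiniteMeasure μ]
    (hμ : isVHaar μ) {L : ℕ} (F : (∀ i : Fin L, Fin (m i)) → ℂ) :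
    ∫ x, F (fun i => x i) ∂μ = (vM m L : ℂ)⁻¹ * ∑ t, F t := by
  have hres : Measurable fun (x : VG m) (i : Fin L) => x i :=
    measurable_pi_lambda _ fun i => measurable_pi_apply _
  have hcyl : ∀ t, (fun (x : VG m) (i : Fin L) => x i) ⁻¹' {t}
      = vCyl m L fun i => if h : i < L then t ⟨i, h⟩ else ⟨0, by linarith [hm i]⟩ := by
    intro t; ext y
    simp only [Set.mem_preimage, Set.mem_singleton_iff, vCyl, Set.mem_ofPred_eq, funext_iff]
    exact ⟨fun h i hi => by simp [hi, ← h], fun h i => by simpa using h i i.isLt⟩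
  rw [← integral_map hres.aemeasurable Measurable.of_discrete.aestronglyMeasurable,
    integral_fintype (.of_finite), mul_sum]
  refine sum_congr rfl fun t _ => ?_
  rw [measureReal_def, Measure.map_apply hres (measurableSet_singleton t), hcyl, hμ,
    ENNReal.toReal_inv, ENNReal.toReal_natCast, Complex.real_smul]
  push_cast; rfl

theorem integral_vpsi_mul_conj (hm : ∀ k, 2 ≤ m k) {μ : Measure (VG m)} [IsProbabilityMeasure μ]
    (hμ : isVHaar μ) (j k : ℕ) :
    ∫ x, vpsi m j x * conj (vpsi m k x) ∂μ = if j = k then 1 else 0 := by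
  split_ifs with hjk
  · subst hjk
    simp [Complex.mul_conj, Complex.normSq_eq_norm_sq, norm_vpsi]
  set L := max j k + 1
  have hjL : j < vM m L := (lt_vM hm j).trans_le (vM_mono hm (by omega))
  have hkL : k < vM m L := (lt_vM hm k).trans_le (vM_mono hm (by omega))
  obtain ⟨i, hiL, hi⟩ : ∃ i < L, vdigit m j i ≠ vdigit m k i := by
    by_contra! h
    exact hjk (eq_of_vdigit_eq hjL hkL h)
  let g : ∀ i : Fin L, Fin (m i) → ℂ := fun i a =>
    vchar m i (vdigit m j i) a * conj (vchar m i (vdigit m k i) a)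
  have hprod : ∀ x : VG m, vpsi m j x * conj (vpsi m k x) = ∏ i, g i (x i) := fun x => by
    rw [vpsi_eq_prod_range hm (L := L) (by omega), vpsi_eq_prod_range hm (L := L) (by omega),
      map_prod, ← prod_mul_distrib, prod_range fun i => _ * _]
  calc ∫ x, vpsi m j x * conj (vpsi m k x) ∂μ
      = ∫ x, ∏ i, g i (x i) ∂μ := by simp only [hprod]
    _ = (vM m L : ℂ)⁻¹ * ∏ i, ∑ a, g i a := by
      rw [integral_comp_restrict hm hμ fun t => ∏ i, g i (t i)]
      exact congrArg _ (Fintype.prod_sum g).symm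
    _ = 0 := by
      rw [prod_eq_zero (mem_univ ⟨i, hiL⟩)
        (sum_vchar_mul_conj_eq_zero (vdigit_lt hm j i) (vdigit_lt hm k i) hi), mul_zero]

section PartialSums

variable {μ : Measure (VG m)}

lemma vCoeff_add {g h : VG m → ℂ} (hg : Integrable g μ) (hh : Integrable h μ) (i : ℕ) :
    vCoeff μ (fun x => g x + h x) i = vCoeff μ g i + vCoeff μ h i := by
  simp only [vCoeff, add_mul]
  exact integral_add (hg.mul_conj_vpsi i) (hh.mul_conj_vpsi i)

lemma vCoeff_const_mul (c : ℂ) (g : VG m → ℂ) (i : ℕ) :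
    vCoeff μ (fun x => c * g x) i = c * vCoeff μ g i := by
  simp only [vCoeff, mul_assoc]
  exact integral_const_mul c _

lemma vS_add {g h : VG m → ℂ} (hg : Integrable g μ) (hh : Integrable h μ) (n : ℕ) (x : VG m) :
    vS μ (fun y => g y + h y) n x = vS μ g n x + vS μ h n x := by
  simp only [vS, vCoeff_add hg hh, add_mul, sum_add_distrib]

lemma vS_const_mul (c : ℂ) (g : VG m → ℂ) (n : ℕ) (x : VG m) :
    vS μ (fun y => c * g y) n x = c * vS μ g n x := by
  simp only [vS, vCoeff_const_mul, mul_assoc, mul_sum]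

lemma measurable_vS (f : VG m → ℂ) (n : ℕ) : Measurable (vS μ f n) :=
  Finset.measurable_sum _ fun k _ => (measurable_vpsi k).const_mul _

lemma vSigma_add {g h : VG m → ℂ} (hg : Integrable g μ) (hh : Integrable h μ) (n : ℕ)
    (x : VG m) : vSigma μ (fun y => g y + h y) n x = vSigma μ g n x + vSigma μ h n x := by
  simp only [vSigma, vS_add hg hh, sum_add_distrib, mul_add]

variable [IsProbabilityMeasure μ]

lemma integrable_vS (f : VG m → ℂ) (n : ℕ) : Integrable (vS μ f n) μ :=
  integrable_finsetSum _ fun k _ => (integrable_vpsi k).const_mul _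

lemma integrable_vSigma (f : VG m → ℂ) (n : ℕ) : Integrable (vSigma μ f n) μ :=
  (integrable_finsetSum _ fun k _ => integrable_vS f k).const_mul _

lemma vCoeff_vS (hm : ∀ k, 2 ≤ m k) (hμ : isVHaar μ) (f : VG m → ℂ) (M i : ℕ) :
    vCoeff μ (vS μ f M) i = if i < M then vCoeff μ f i else 0 := by
  have hsum : ∀ x, vS μ f M x * conj (vpsi m i x)
      = ∑ k ∈ range M, vCoeff μ f k * (vpsi m k x * conj (vpsi m i x)) := fun x => by
    simp only [vS, sum_mul, mul_assoc]
  simp only [vCoeff, hsum]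
  rw [integral_finsetSum _ fun k _ => ((integrable_vpsi k).mul_conj_vpsi i).const_mul _]
  simp only [integral_const_mul, integral_vpsi_mul_conj hm hμ, mul_ite, mul_one, mul_zero,
    sum_ite_eq', mem_range]

lemma vS_vS (hm : ∀ k, 2 ≤ m k) (hμ : isVHaar μ) (f : VG m → ℂ) (M n : ℕ) (x : VG m) :
    vS μ (vS μ f M) n x = vS μ f (min n M) x := by
  simp only [vS, vCoeff_vS hm hμ, ite_mul, zero_mul]
  rw [← sum_filter]
  congr 1
  ext a
  simp

lemma vSigma_vS_sub_vS (hm : ∀ k, 2 ≤ m k) (hμ : isVHaar μ) (f : VG m → ℂ) {M n : ℕ}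
    (hM : 0 < M) (hMn : M ≤ n) (x : VG m) :
    vSigma μ (vS μ f M) n x - vS μ f M x = (M / n : ℂ) * (vSigma μ f M x - vS μ f M x) := by
  have hlow : ∑ k ∈ Ioc 0 M, vS μ (vS μ f M) k x = ∑ k ∈ Ioc 0 M, vS μ f k x :=
    sum_congr rfl fun k hk => by rw [vS_vS hm hμ, min_eq_left (mem_Ioc.1 hk).2]
  have hhigh : ∑ k ∈ Ioc M n, vS μ (vS μ f M) k x = (n - M : ℕ) * vS μ f M x := by
    rw [sum_congr rfl fun k hk => by rw [vS_vS hm hμ, min_eq_right (mem_Ioc.1 hk).1.le],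
      sum_const, Nat.card_Ioc, nsmul_eq_mul]
  have hIcc : ∀ b, Icc 1 b = Ioc 0 b := Icc_add_one_left_eq_Ioc 0
  simp only [vSigma, hIcc]
  rw [← sum_Ioc_consecutive _ hM.le hMn, hlow, hhigh]
  have : (M : ℂ) ≠ 0 := by exact_mod_cast hM.ne'
  have : (n : ℂ) ≠ 0 := by exact_mod_cast (hM.trans_le hMn).ne'
  push_cast [Nat.cast_sub hMn]
  field_simp
  ring

end PartialSums

section HardySpace

variable {μ : Measure (VG m)} {p : ℝ}

lemma vHp_rpow (hp : 0 < p) (g : VG m → ℂ) :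
    vHp μ p g ^ p = ∫⁻ x, (⨆ k, ENNReal.ofReal ‖vS μ g (vM m k) x‖) ^ p ∂μ := by
  rw [vHp, ← ENNReal.rpow_mul, one_div, inv_mul_cancel₀ hp.ne', ENNReal.rpow_one]

lemma vHp_mono (hp : 0 < p) {g h : VG m → ℂ} (hle : ∀ n x, ‖vS μ g n x‖ ≤ ‖vS μ h n x‖) :
    vHp μ p g ≤ vHp μ p h := by
  unfold vHp
  gcongr with x k
  exact hle _ x

lemma vHp_const_mul_le (hp : 0 < p) {c : ℂ} (hc : ‖c‖ ≤ 1) (g : VG m → ℂ) :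
    vHp μ p (fun x => c * g x) ≤ vHp μ p g :=
  vHp_mono hp fun n x => by
    rw [vS_const_mul, norm_mul]
    exact mul_le_of_le_one_left (norm_nonneg _) hc

lemma vHp_sub_comm (hp : 0 < p) (g h : VG m → ℂ) :
    vHp μ p (fun x => g x - h x) = vHp μ p (fun x => h x - g x) := by
  have key : ∀ g h : VG m → ℂ, vHp μ p (fun x => g x - h x) ≤ vHp μ p (fun x => h x - g x) :=
    fun g h => by simpa using vHp_const_mul_le (μ := μ) hp (c := -1) (by simp) fun x => h x - g x
  exact le_antisymm (key g h) (key h g)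

lemma vHp_add_rpow_le (hp0 : 0 < p) (hp1 : p ≤ 1) {g h : VG m → ℂ} (hg : Integrable g μ)
    (hh : Integrable h μ) :
    vHp μ p (fun x => g x + h x) ^ p ≤ vHp μ p g ^ p + vHp μ p h ^ p := by
  set Ug := fun x => ⨆ k, ENNReal.ofReal ‖vS μ g (vM m k) x‖
  set Uh := fun x => ⨆ k, ENNReal.ofReal ‖vS μ h (vM m k) x‖
  have hmax : ∀ x, ⨆ k, ENNReal.ofReal ‖vS μ (fun y => g y + h y) (vM m k) x‖ ≤ Ug x + Uh x :=
    fun x => iSup_le fun k => by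
      rw [vS_add hg hh]
      exact ((ENNReal.ofReal_le_ofReal (norm_add_le _ _)).trans ENNReal.ofReal_add_le).trans
        (add_le_add (le_iSup (fun k => ENNReal.ofReal ‖vS μ g (vM m k) x‖) k)
          (le_iSup (fun k => ENNReal.ofReal ‖vS μ h (vM m k) x‖) k))
  have hUg : Measurable Ug :=
    .iSup fun k => (measurable_vS g (vM m k)).norm.ennreal_ofReal
  rw [vHp_rpow hp0, vHp_rpow hp0, vHp_rpow hp0, ← lintegral_add_left (hUg.pow_const p)]
  exact lintegral_mono fun x => (ENNReal.rpow_le_rpow (hmax x) hp0.le).trans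
    (ENNReal.rpow_add_le_add_rpow _ _ hp0.le hp1)

end HardySpace

theorem vHp_vSigma_sub_rpow_le (hm : ∀ k, 2 ≤ m k) {μ : Measure (VG m)} [IsProbabilityMeasure μ]
    (hμ : isVHaar μ) {p : ℝ} (hp0 : 0 < p) (hp1 : p ≤ 1) {f : VG m → ℂ} (hf : Integrable f μ)
    {M n : ℕ} (hM : 0 < M) (hMn : M ≤ n) :
    vHp μ p (fun x => vSigma μ f n x - f x) ^ p
      ≤ vHp μ p (vSigma μ (fun x => f x - vS μ f M x) n) ^ p
        + vHp μ p (fun x => vSigma μ f M x - f x) ^ p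
        + vHp μ p (fun x => vS μ f M x - f x) ^ p := by
  set c : ℝ := M / n
  have hc0 : 0 ≤ c := by positivity
  have hc1 : c ≤ 1 := div_le_one_of_le₀ (by exact_mod_cast hMn) (by positivity)
  have hS := integrable_vS (μ := μ) f M
  have hdec : (fun x => vSigma μ f n x - f x) = fun x => vSigma μ (fun y => f y - vS μ f M y) n x
      + ((c : ℂ) * (vSigma μ f M x - f x) + ((1 - c : ℝ) : ℂ) * (vS μ f M x - f x)) := by
    funext x
    have hsplit : vSigma μ f n x
        = vSigma μ (fun y => f y - vS μ f M y) n x + vSigma μ (vS μ f M) n x := by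
      simpa only [sub_add_cancel] using
        vSigma_add (g := fun y => f y - vS μ f M y) (hf.sub hS) hS n x
    rw [hsplit]
    push_cast [c]
    linear_combination vSigma_vS_sub_vS hm hμ f hM hMn x
  have hnorm : ∀ t : ℝ, 0 ≤ t → t ≤ 1 → ‖(t : ℂ)‖ ≤ 1 := fun t h0 h1 => by
    rwa [Complex.norm_real, Real.norm_of_nonneg h0]
  rw [hdec]
  calc _ ≤ _ + _ := vHp_add_rpow_le hp0 hp1 (integrable_vSigma _ n)
        ((((integrable_vSigma f M).sub hf).const_mul _).add ((hS.sub hf).const_mul _))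
    _ ≤ _ + (_ + _) := by
      gcongr
      exact vHp_add_rpow_le hp0 hp1 (((integrable_vSigma f M).sub hf).const_mul _)
        ((hS.sub hf).const_mul _)
    _ ≤ _ := by
      rw [← add_assoc]
      gcongr
      · exact vHp_const_mul_le hp0 (hnorm c hc0 hc1) _
      · exact vHp_const_mul_le hp0 (hnorm _ (by linarith) (by linarith)) _

def vN (m : ℕ → ℕ) (n : ℕ) : ℕ := Nat.findGreatest (fun N => vM m N < n) n

lemma vM_vN_lt {n : ℕ} (hn : 1 < n) : vM m (vN m n) < n :=
  Nat.findGreatest_spec (P := fun N => vM m N < n) (Nat.zero_le n) (by simpa [vM] using hn)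

lemma le_vN (hm : ∀ k, 2 ≤ m k) {N n : ℕ} (h : vM m N < n) : N ≤ vN m n :=
  Nat.le_findGreatest ((lt_vM hm N).trans h).le h

lemma le_vM_vN_succ (hm : ∀ k, 2 ≤ m k) (n : ℕ) : n ≤ vM m (vN m n + 1) := by
  by_contra! h
  exact (le_vN hm h).not_gt (Nat.lt_succ_self _)

lemma tendsto_vN (hm : ∀ k, 2 ≤ m k) : Tendsto (vN m) atTop atTop :=
  tendsto_atTop.2 fun N => (eventually_gt_atTop (vM m N)).mono fun _ => le_vN hm

lemma log_le_of_le_vM_succ {B : ℕ} (hB : ∀ k, m k ≤ B) (hB1 : 1 ≤ B) {N n : ℕ} (hN : 1 ≤ N)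
    (hn : 0 < n) (hnN : n ≤ vM m (N + 1)) : Real.log n ≤ 2 * Real.log B * N := by
  have hlog : Real.log n ≤ (N + 1) * Real.log B := by
    rw [← Nat.cast_add_one, ← Real.log_pow]
    exact Real.log_le_log (by exact_mod_cast hn) (by exact_mod_cast hnN.trans (vM_le_pow hB _))
  have : 0 ≤ Real.log B := Real.log_nonneg (by exact_mod_cast hB1)
  have : (1 : ℝ) ≤ N := by exact_mod_cast hN
  nlinarith

/-- `ω_{H_p}(1/M_N, f) · M_N ^ γ · N ^ e`. -/
def vWeightedModulus (μ : Measure (VG m)) (p γ : ℝ) (e : ℕ) (f : VG m → ℂ) (N : ℕ) : ℝ≥0∞ :=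
  vHp μ p (fun x => vS μ f (vM m N) x - f x) * (vM m N : ℝ≥0∞) ^ γ * (N : ℝ≥0∞) ^ (e : ℝ)

lemma vHp_vS_sub_le_vWeightedModulus (hm : ∀ k, 2 ≤ m k) {μ : Measure (VG m)} {p γ : ℝ}
    (hγ : 0 ≤ γ) (e : ℕ) (f : VG m → ℂ) {N : ℕ} (hN : 1 ≤ N) :
    vHp μ p (fun x => vS μ f (vM m N) x - f x) ≤ vWeightedModulus μ p γ e f N := by
  have hM : (1 : ℝ≥0∞) ≤ (vM m N : ℝ≥0∞) ^ γ :=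
    ENNReal.one_rpow γ ▸ ENNReal.rpow_le_rpow (by exact_mod_cast vM_pos hm N) hγ
  have hN' : (1 : ℝ≥0∞) ≤ (N : ℝ≥0∞) ^ (e : ℝ) :=
    ENNReal.one_rpow (e : ℝ) ▸ ENNReal.rpow_le_rpow (by exact_mod_cast hN) (by positivity)
  exact (le_mul_of_one_le_right' hM).trans (le_mul_of_one_le_right' hN')

theorem vHp_vSigma_sub_rpow_le_of_block (hm : ∀ k, 2 ≤ m k) {B : ℕ} (hB : ∀ k, m k ≤ B)
    {μ : Measure (VG m)} [IsProbabilityMeasure μ] (hμ : isVHaar μ) {p : ℝ} (hp0 : 0 < p)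
    (hp1 : p ≤ 1) {f : VG m → ℂ} (hf : Integrable f μ) {C : ℝ≥0} {γ : ℝ} (hγ : 0 ≤ γ) {e : ℕ}
    {N n : ℕ} (hN : 1 ≤ N) (hMn : vM m N < n) (hnM : n ≤ vM m (N + 1))
    (hbound : vHp μ p (vSigma μ (fun x => f x - vS μ f (vM m N) x) n)
      ≤ C * (n : ℝ≥0∞) ^ γ * ENNReal.ofReal (Real.log n) ^ e
        * vHp μ p (fun x => f x - vS μ f (vM m N) x)) :
    vHp μ p (fun x => vSigma μ f n x - f x) ^ p
      ≤ (C * (B : ℝ≥0∞) ^ γ * ENNReal.ofReal (2 * Real.log B) ^ e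
          * vWeightedModulus μ p γ e f N) ^ p
        + vHp μ p (fun x => vSigma μ f (vM m N) x - f x) ^ p
        + vWeightedModulus μ p γ e f N ^ p := by
  have hn : 0 < n := (vM_pos hm N).trans hMn
  have hpow : (n : ℝ≥0∞) ^ γ ≤ (B : ℝ≥0∞) ^ γ * (vM m N : ℝ≥0∞) ^ γ := by
    rw [← ENNReal.mul_rpow_of_nonneg _ _ hγ]
    exact ENNReal.rpow_le_rpow (by exact_mod_cast hnM.trans (Nat.mul_le_mul_right _ (hB N))) hγ
  have hlog : ENNReal.ofReal (Real.log n) ^ e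
      ≤ ENNReal.ofReal (2 * Real.log B) ^ e * (N : ℝ≥0∞) ^ (e : ℝ) := by
    have hB1 : 1 ≤ B := by linarith [hm 0, hB 0]
    rw [ENNReal.rpow_natCast, ← mul_pow, ← ENNReal.ofReal_natCast,
      ← ENNReal.ofReal_mul (mul_nonneg zero_le_two (Real.log_nonneg (by exact_mod_cast hB1)))]
    gcongr
    exact log_le_of_le_vM_succ hB hB1 hN hn hnM
  have hfirst : vHp μ p (vSigma μ (fun x => f x - vS μ f (vM m N) x) n)
      ≤ C * (B : ℝ≥0∞) ^ γ * ENNReal.ofReal (2 * Real.log B) ^ e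
          * vWeightedModulus μ p γ e f N := by
    refine hbound.trans ?_
    rw [vHp_sub_comm hp0, vWeightedModulus]
    calc _ ≤ C * ((B : ℝ≥0∞) ^ γ * (vM m N : ℝ≥0∞) ^ γ)
          * (ENNReal.ofReal (2 * Real.log B) ^ e * (N : ℝ≥0∞) ^ (e : ℝ))
          * vHp μ p (fun x => vS μ f (vM m N) x - f x) := by gcongr
      _ = _ := by ring
  refine (vHp_vSigma_sub_rpow_le hm hμ hp0 hp1 hf (vM_pos hm N) hMn.le).trans ?_
  gcongr
  exact vHp_vS_sub_le_vWeightedModulus hm hγ e f hN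

/-- for `0 < p ≤ 1/2`, under the norm estimate for `σ_n`, convergence of
`σ_{M_N} f → f` in `H_p`, and the modulus-of-continuity condition
`ω_{H_p}(1/M_N, f) = o(M_N^{-(1/p-2)} N^{-2[1/2+p]})`, one has `‖σ_n f - f‖_{H_p} → 0`. -/
theorem fejer_convergence_of_modulus (m : ℕ → ℕ) (hm : ∀ k, 2 ≤ m k) (hb : ∃ B, ∀ k, m k ≤ B)
    (μ : Measure (VG m)) [IsProbabilityMeasure μ] (hμ : isVHaar μ)
    (p : ℝ) (hp0 : 0 < p) (hp1 : p ≤ 1 / 2)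
    (f : VG m → ℂ) (hf : Integrable f μ) (C : ℝ≥0)
    (hbound : ∀ g : VG m → ℂ, Integrable g μ → ∀ n : ℕ, 2 ≤ n →
      vHp μ p (vSigma μ g n) ≤
        C * (n : ℝ≥0∞) ^ (1 / p - 2) *
          (ENNReal.ofReal (Real.log n)) ^ (2 * Nat.floor (1 / 2 + p : ℝ)) * vHp μ p g)
    (hconv : Tendsto (fun N : ℕ => vHp μ p (fun x => vSigma μ f (vM m N) x - f x))
      atTop (nhds 0))
    (hmod : Tendsto (fun N : ℕ =>
        vHp μ p (fun x => vS μ f (vM m N) x - f x) * (vM m N : ℝ≥0∞) ^ (1 / p - 2) *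
          (N : ℝ≥0∞) ^ ((2 * Nat.floor (1 / 2 + p : ℝ) : ℕ) : ℝ))
      atTop (nhds 0)) :
    Tendsto (fun n : ℕ => vHp μ p (fun x => vSigma μ f n x - f x)) atTop (nhds 0) := by
  obtain ⟨B, hB⟩ := hb
  set γ : ℝ := 1 / p - 2
  set e : ℕ := 2 * Nat.floor (1 / 2 + p : ℝ)
  have hγ : 0 ≤ γ := by rw [sub_nonneg, le_div_iff₀ hp0]; linarith
  have hω : Tendsto (vWeightedModulus μ p γ e f) atTop (nhds 0) := hmod
  set K : ℝ≥0∞ := C * (B : ℝ≥0∞) ^ γ * ENNReal.ofReal (2 * Real.log B) ^ e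
  have hK : K ≠ ⊤ := by finiteness
  have hblock : ∀ᶠ n in atTop, vHp μ p (fun x => vSigma μ f n x - f x) ^ p
      ≤ (K * vWeightedModulus μ p γ e f (vN m n)) ^ p
        + vHp μ p (fun x => vSigma μ f (vM m (vN m n)) x - f x) ^ p
        + vWeightedModulus μ p γ e f (vN m n) ^ p := by
    filter_upwards [eventually_gt_atTop (vM m 1)] with n hn
    have hn2 : 2 ≤ n := by have := hm 0; simp [vM] at hn; omega
    exact vHp_vSigma_sub_rpow_le_of_block hm hB hμ hp0 (by linarith) hf hγ (le_vN hm hn)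
      (vM_vN_lt hn2) (le_vM_vN_succ hm n) (hbound _ (hf.sub (integrable_vS f _)) n hn2)
  have hlim := ((((ENNReal.Tendsto.const_mul hω (.inr hK)).ennrpow_const p).add
    (hconv.ennrpow_const p)).add (hω.ennrpow_const p)).comp (tendsto_vN hm)
  simp only [mul_zero, ENNReal.zero_rpow_of_pos hp0, add_zero] at hlim
  have hrpow := tendsto_of_tendsto_of_tendsto_of_le_of_le' tendsto_const_nhds hlim
    (.of_forall fun _ => zero_le) hblock
  simpa [ENNReal.rpow_rpow_inv hp0.ne', ENNReal.zero_rpow_of_pos (inv_pos.2 hp0)] using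
    hrpow.ennrpow_const p⁻¹

end
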